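/- arXiv:1411.7080 — 6 statements merged into one kernel-verified Lean document; each statement's English description precedes it below -/
import Mathlib

section
/- Let X̂ₙ = Xₙ + h(θ f(X̂ₙ) + (1−θ) f(Xₙ) − (η/2)·Σ_{j=1}^m G_j(X̂ₙ) − ((1−η)/2)·Σ_{j=1}^m G_j(Xₙ)) where each G_j and f are globally Lipschitz with constant K₁ and satisfy the linear growth bound with constant K₂. If h(2θ + ηm)K₁ < 2, then |X̂ₙ − Xₙ| ≤ (h(2+m)K₂ / (2 − h(2θ + ηm)K₁))·(1+|Xₙ|²)^{1/2}. -/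
/-- Bound on the deterministic stage of the modified split-step composite
θ-Milstein (MSSCTM) method: if
`X̂ₙ = Xₙ + h(θ f(X̂ₙ) + (1−θ) f(Xₙ) − (η/2)ΣⱼGⱼ(X̂ₙ) − ((1−η)/2)ΣⱼGⱼ(Xₙ))`,
where `f` and each `Gⱼ` are globally Lipschitz with constant `K₁` and satisfy the
linear growth bound with constant `K₂`, and `h(2θ+ηm)K₁ < 2`, then
`‖X̂ₙ − Xₙ‖ ≤ (h(2+m)K₂/(2 − h(2θ+ηm)K₁))·(1+‖Xₙ‖²)^{1/2}`. -/
theorem mssctm_stage_bound {d m : ℕ}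
    (f : EuclideanSpace ℝ (Fin d) → EuclideanSpace ℝ (Fin d))
    (G : Fin m → EuclideanSpace ℝ (Fin d) → EuclideanSpace ℝ (Fin d))
    (h θ η K₁ K₂ : ℝ) (hh : 0 < h) (hθ : θ ∈ Set.Icc (0:ℝ) 1)
    (hη : η ∈ Set.Icc (0:ℝ) 1) (hK₁ : 0 < K₁) (hK₂ : 0 < K₂)
    (hLipf : ∀ a b, ‖f a - f b‖ ≤ K₁ * ‖a - b‖)
    (hLipG : ∀ j a b, ‖G j a - G j b‖ ≤ K₁ * ‖a - b‖)
    (hGrowf : ∀ a, ‖f a‖ ≤ K₂ * Real.sqrt (1 + ‖a‖ ^ 2))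
    (hGrowG : ∀ j a, ‖G j a‖ ≤ K₂ * Real.sqrt (1 + ‖a‖ ^ 2))
    (X Xhat : EuclideanSpace ℝ (Fin d))
    (hstage : Xhat = X + h • (θ • f Xhat + (1 - θ) • f X
      - (η / 2) • ∑ j, G j Xhat - ((1 - η) / 2) • ∑ j, G j X))
    (hcontr : h * (2 * θ + η * m) * K₁ < 2) :
    ‖Xhat - X‖ ≤ h * (2 + m) * K₂ / (2 - h * (2 * θ + η * m) * K₁)
      * Real.sqrt (1 + ‖X‖ ^ 2) := by
  have hθ0 := hθ.1
  have hη0 := hη.1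
  set S := Real.sqrt (1 + ‖X‖ ^ 2) with hSdef
  have hS : (0:ℝ) < S := Real.sqrt_pos.mpr (by positivity)
  set A := θ • (f Xhat - f X) with hA
  set B := f X with hB
  set C := (η / 2) • (∑ j, G j Xhat - ∑ j, G j X) with hC
  set D := (1/2 : ℝ) • ∑ j, G j X with hD
  have key : Xhat - X = h • (A + B - C - D) := by
    rw [hstage, add_sub_cancel_left]; rw [hA, hB, hC, hD]; module
  have h1 : ‖f Xhat - f X‖ ≤ K₁ * ‖Xhat - X‖ := hLipf _ _
  have h2 : ‖∑ j, G j Xhat - ∑ j, G j X‖ ≤ m * (K₁ * ‖Xhat - X‖) := by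
    rw [← Finset.sum_sub_distrib]
    calc ‖∑ j, (G j Xhat - G j X)‖ ≤ ∑ j, ‖G j Xhat - G j X‖ := norm_sum_le _ _
      _ ≤ ∑ _j : Fin m, K₁ * ‖Xhat - X‖ := Finset.sum_le_sum fun j _ => hLipG j _ _
      _ = m * (K₁ * ‖Xhat - X‖) := by simp [mul_comm]
  have h3 : ‖∑ j, G j X‖ ≤ m * (K₂ * S) := by
    calc ‖∑ j, G j X‖ ≤ ∑ j, ‖G j X‖ := norm_sum_le _ _
      _ ≤ ∑ _j : Fin m, K₂ * S := Finset.sum_le_sum fun j _ => hGrowG j _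
      _ = m * (K₂ * S) := by simp [mul_comm]
  have h4 : ‖B‖ ≤ K₂ * S := hGrowf _
  have t1 : ‖A‖ ≤ θ * (K₁ * ‖Xhat - X‖) := by
    rw [hA, norm_smul, Real.norm_eq_abs, abs_of_nonneg hθ0]
    exact mul_le_mul_of_nonneg_left h1 hθ0
  have t2 : ‖C‖ ≤ (η / 2) * (m * (K₁ * ‖Xhat - X‖)) := by
    rw [hC, norm_smul, Real.norm_eq_abs, abs_of_nonneg (by linarith : (0:ℝ) ≤ η / 2)]
    exact mul_le_mul_of_nonneg_left h2 (by linarith)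
  have t3 : ‖D‖ ≤ (1/2) * (m * (K₂ * S)) := by
    rw [hD, norm_smul, Real.norm_eq_abs]
    have : |(1/2 : ℝ)| = 1/2 := by norm_num
    rw [this]
    exact mul_le_mul_of_nonneg_left h3 (by norm_num)
  have e1 : ‖A + B - C - D‖ ≤ ‖A + B - C‖ + ‖D‖ := norm_sub_le _ _
  have e2 : ‖A + B - C‖ ≤ ‖A + B‖ + ‖C‖ := norm_sub_le _ _
  have e3 : ‖A + B‖ ≤ ‖A‖ + ‖B‖ := norm_add_le _ _
  have hN : ‖Xhat - X‖ ≤ h * (θ * (K₁ * ‖Xhat - X‖) + K₂ * S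
      + (η / 2) * (m * (K₁ * ‖Xhat - X‖)) + (1/2) * (m * (K₂ * S))) := by
    calc ‖Xhat - X‖ = h * ‖A + B - C - D‖ := by
          rw [key, norm_smul, Real.norm_eq_abs, abs_of_pos hh]
      _ ≤ _ := by
          apply mul_le_mul_of_nonneg_left _ hh.le
          linarith
  have hden : (0:ℝ) < 2 - h * (2 * θ + η * m) * K₁ := by linarith
  rw [div_mul_eq_mul_div, le_div_iff₀ hden]
  nlinarith [norm_nonneg (Xhat - X), hN]
end

section
/- If Xₙ₊₁ = RₙXₙ with i.i.d. random matrices Rₙ and S = E[Rₙ⊗Rₙ] has spectral radius ρ(S) < 1, then E|Xₙ|² → 0 as n → ∞ for any square-integrable initial value X₀ independent of the (Rₙ). -/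
/-!
The vectorised second moment `vₙ = E[Xₙ ⊗ Xₙ]` satisfies `vₙ₊₁ = S vₙ`: pointwise
`(RX) ⊗ (RX) = (R ⊗ R)(X ⊗ X)`, and the expectation factors because `Rₙ` is independent of `Xₙ`.
Hence `vₙ = Sⁿ v₀`, and `E|Xₙ|²` is the sum of the diagonal entries `vₙ (i, i)`. By Gelfand's
formula `ρ(S) < 1` forces `Sⁿ → 0`.
-/

open MeasureTheory ProbabilityTheory Filter

instance matrixMeasurableSpace {d : ℕ} : MeasurableSpace (Matrix (Fin d) (Fin d) ℝ) :=
  show MeasurableSpace (Fin d → Fin d → ℝ) from inferInstance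

open Topology Matrix

theorem tendsto_pow_atTop_nhds_zero_of_spectralRadius_lt_one {A : Type*} [NormedRing A]
    [NormedAlgebra ℂ A] [CompleteSpace A] {a : A} (ha : spectralRadius ℂ a < 1) :
    Tendsto (a ^ ·) atTop (𝓝 0) := by
  obtain ⟨r, hρr, hr1⟩ := ENNReal.lt_iff_exists_nnreal_btwn.mp ha
  have hgelfand := spectrum.pow_nnnorm_pow_one_div_tendsto_nhds_spectralRadius a
  have hbound : ∀ᶠ n : ℕ in atTop, ‖a ^ n‖₊ ≤ r ^ n := by
    filter_upwards [hgelfand.eventually_lt_const hρr, eventually_ne_atTop 0] with n hn hn0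
    rw [one_div] at hn
    have := pow_le_pow_left₀ bot_le hn.le n
    rw [ENNReal.rpow_inv_natCast_pow hn0] at this
    exact_mod_cast this
  refine squeeze_zero_norm' (hbound.mono fun n hn => ?_)
    (tendsto_pow_atTop_nhds_zero_of_lt_one r.2 (by exact_mod_cast hr1))
  exact_mod_cast hn

theorem Matrix.tendsto_pow_atTop_nhds_zero_of_forall_norm_lt_one {m : Type*} [Fintype m]
    [DecidableEq m] (S : Matrix m m ℝ)
    (hS : ∀ μ ∈ spectrum ℂ (S.map (Complex.ofReal ·)), ‖μ‖ < 1) :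
    Tendsto (S ^ ·) atTop (𝓝 0) := by
  cases isEmpty_or_nonempty m
  · exact tendsto_const_nhds.congr fun _ => Subsingleton.elim _ _
  -- Any Banach algebra norm will do: its topology is the entrywise one.
  let _ := Matrix.linftyOpNormedRing (n := m) (α := ℂ)
  let _ := Matrix.linftyOpNormedAlgebra (n := m) (α := ℂ) (R := ℂ)
  have : CompleteSpace (Matrix m m ℂ) := FiniteDimensional.complete ℂ _
  have hρ : spectralRadius ℂ (S.map (Complex.ofReal ·)) < 1 := by
    simpa using spectrum.spectralRadius_lt_of_forall_lt _ (r := 1) fun μ hμ => by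
      exact_mod_cast hS μ hμ
  have hre : Continuous fun M : Matrix m m ℂ => M.map Complex.re :=
    continuous_id.matrix_map Complex.continuous_re
  convert (hre.tendsto 0).comp (tendsto_pow_atTop_nhds_zero_of_spectralRadius_lt_one hρ) using 1
  · ext n : 1
    have hpow : (S.map (Complex.ofReal ·)) ^ n = (S ^ n).map (Complex.ofReal ·) :=
      (map_pow Complex.ofRealHom.mapMatrix S n).symm
    ext i j
    simp [hpow]
  · simp

theorem Matrix.mulVec_apply_mul_mulVec_apply {ι R : Type*} [Fintype ι] [CommSemiring R]
    (A : Matrix ι ι R) (y : ι → R) (i j : ι) :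
    (A *ᵥ y) i * (A *ᵥ y) j = ∑ q : ι × ι, A i q.1 * A j q.2 * (y q.1 * y q.2) := by
  simp only [mulVec, dotProduct, Finset.sum_mul_sum, Fintype.sum_prod_type]
  exact Finset.sum_congr rfl fun _ _ => Finset.sum_congr rfl fun _ _ => by ring

theorem measurable_matrix_apply {d : ℕ} (i j : Fin d) :
    Measurable fun A : Matrix (Fin d) (Fin d) ℝ => A i j :=
  (measurable_pi_apply j).comp (measurable_pi_apply i)

section SecondMoment

variable {Ω : Type*} [MeasurableSpace Ω] {P : Measure Ω}

theorem ProbabilityTheory.IndepFun.memLp_two_mul {f g : Ω → ℝ} (hfg : IndepFun f g P)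
    (hf : MemLp f 2 P) (hg : MemLp g 2 P) : MemLp (f * g) 2 P := by
  have hsq : IndepFun (fun ω => f ω ^ 2) (fun ω => g ω ^ 2) P :=
    hfg.comp (measurable_id.pow_const 2) (measurable_id.pow_const 2)
  rw [memLp_two_iff_integrable_sq (hf.1.mul hg.1)]
  simpa only [Pi.mul_def, mul_pow] using
    hsq.integrable_mul ((memLp_two_iff_integrable_sq hf.1).mp hf)
      ((memLp_two_iff_integrable_sq hg.1).mp hg)

/-- `E[Y ⊗ Y]`, the vectorisation of `E[Y Yᵀ]`. -/
noncomputable def secondMoment {ι : Type*} (P : Measure Ω) (Y : Ω → ι → ℝ) : ι × ι → ℝ :=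
  fun p => ∫ ω, Y ω p.1 * Y ω p.2 ∂P

theorem integral_sum_sq_eq_sum_secondMoment {ι : Type*} [Fintype ι] {Y : Ω → ι → ℝ}
    (hY : ∀ i, MemLp (Y · i) 2 P) :
    ∫ ω, ∑ i, Y ω i ^ 2 ∂P = ∑ i, secondMoment P Y (i, i) := by
  rw [integral_finsetSum _ fun i _ => (memLp_two_iff_integrable_sq (hY i).1).mp (hY i)]
  simp only [secondMoment, sq]

variable {d : ℕ} {M : Ω → Matrix (Fin d) (Fin d) ℝ} {Y : Ω → Fin d → ℝ}

theorem memLp_mulVec_apply (hMY : IndepFun M Y P) (hM : ∀ i j, MemLp (M · i j) 2 P)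
    (hY : ∀ j, MemLp (Y · j) 2 P) (i : Fin d) : MemLp (fun ω => (M ω *ᵥ Y ω) i) 2 P := by
  simp only [mulVec, dotProduct]
  refine memLp_finsetSum _ fun j _ => ?_
  exact IndepFun.memLp_two_mul (hMY.comp (measurable_matrix_apply i j) (measurable_pi_apply j))
    (hM i j) (hY j)

theorem secondMoment_mulVec {S : Matrix (Fin d × Fin d) (Fin d × Fin d) ℝ}
    (hMY : IndepFun M Y P) (hM : ∀ i j, MemLp (M · i j) 2 P) (hY : ∀ j, MemLp (Y · j) 2 P)
    (hS : ∀ p q : Fin d × Fin d, ∫ ω, M ω p.1 q.1 * M ω p.2 q.2 ∂P = S p q) :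
    secondMoment P (fun ω => M ω *ᵥ Y ω) = S *ᵥ secondMoment P Y := by
  have hindep (p q : Fin d × Fin d) : IndepFun (fun ω => M ω p.1 q.1 * M ω p.2 q.2)
      (fun ω => Y ω q.1 * Y ω q.2) P :=
    hMY.comp ((measurable_matrix_apply p.1 q.1).mul (measurable_matrix_apply p.2 q.2))
      ((measurable_pi_apply q.1).mul (measurable_pi_apply q.2))
  have hMM (p q : Fin d × Fin d) : Integrable (fun ω => M ω p.1 q.1 * M ω p.2 q.2) P :=
    (hM p.1 q.1).integrable_mul (hM p.2 q.2)
  have hYY (q : Fin d × Fin d) : Integrable (fun ω => Y ω q.1 * Y ω q.2) P :=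
    (hY q.1).integrable_mul (hY q.2)
  ext p
  have hterm (q : Fin d × Fin d) : Integrable
      (fun ω => M ω p.1 q.1 * M ω p.2 q.2 * (Y ω q.1 * Y ω q.2)) P :=
    (hindep p q).integrable_mul (hMM p q) (hYY q)
  simp only [secondMoment, mulVec_apply_mul_mulVec_apply]
  rw [integral_finsetSum _ fun q _ => hterm q]
  refine Finset.sum_congr rfl fun q _ => ?_
  calc _ = (∫ ω, M ω p.1 q.1 * M ω p.2 q.2 ∂P) * secondMoment P Y q :=
        (hindep p q).integral_mul_eq_mul_integral (hMM p q).1 (hYY q).1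
    _ = S p q * secondMoment P Y q := by rw [hS p q]

end SecondMoment

theorem ms_stability_of_spectral_radius_lt_one_general {d : ℕ} {Ω : Type*}
    [MeasurableSpace Ω] (P : Measure Ω)
    (R : ℕ → Ω → Matrix (Fin d) (Fin d) ℝ) (X : ℕ → Ω → (Fin d → ℝ))
    (S : Matrix (Fin d × Fin d) (Fin d × Fin d) ℝ)
    (hRL2 : ∀ n i j, MemLp (fun ω => R n ω i j) 2 P)
    (hXL2 : ∀ i, MemLp (fun ω => X 0 ω i) 2 P)
    (hindep : ∀ n, IndepFun (R n) (X n) P)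
    (hrec : ∀ n ω, X (n + 1) ω = (R n ω).mulVec (X n ω))
    (hS : ∀ n, ∀ p q : Fin d × Fin d,
      (∫ ω, R n ω p.1 q.1 * R n ω p.2 q.2 ∂P) = S p q)
    (hρ : ∀ μ ∈ spectrum ℂ (S.map (Complex.ofReal ·)), ‖μ‖ < 1) :
    Tendsto (fun n => ∫ ω, ∑ i, (X n ω i) ^ 2 ∂P) atTop (nhds 0) := by
  have hstep (n : ℕ) : X (n + 1) = fun ω => R n ω *ᵥ X n ω := funext (hrec n)
  have hXnL2 (n : ℕ) : ∀ i, MemLp (X n · i) 2 P := by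
    induction n with
    | zero => exact hXL2
    | succ n ih => rw [hstep]; exact memLp_mulVec_apply (hindep n) (hRL2 n) ih
  have hmoment (n : ℕ) : secondMoment P (X n) = S ^ n *ᵥ secondMoment P (X 0) := by
    induction n with
    | zero => rw [pow_zero, one_mulVec]
    | succ n ih =>
      rw [hstep, secondMoment_mulVec (hindep n) (hRL2 n) (hXnL2 n) (hS n), ih, mulVec_mulVec,
        pow_succ']
  have hnormSq (n : ℕ) :
      ∫ ω, ∑ i, X n ω i ^ 2 ∂P = ∑ i, (S ^ n *ᵥ secondMoment P (X 0)) (i, i) := by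
    rw [integral_sum_sq_eq_sum_secondMoment (hXnL2 n), hmoment n]
  simp only [hnormSq]
  have hcont : Continuous fun A : Matrix (Fin d × Fin d) (Fin d × Fin d) ℝ =>
      ∑ i, (A *ᵥ secondMoment P (X 0)) (i, i) := by
    fun_prop
  exact (hcont.tendsto' 0 0 (by simp)).comp
    (S.tendsto_pow_atTop_nhds_zero_of_forall_norm_lt_one hρ)

/-- If `Xₙ₊₁ = RₙXₙ` with i.i.d. random matrices `Rₙ` and
`S = E[Rₙ⊗Rₙ]` has spectral radius `ρ(S) < 1`, then `E|Xₙ|² → 0` as `n → ∞`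
for any square-integrable initial value `X₀` independent of the `Rₙ`. -/
theorem ms_stability_of_spectral_radius_lt_one {d : ℕ} {Ω : Type*}
    [MeasurableSpace Ω] (P : Measure Ω) [IsProbabilityMeasure P]
    (R : ℕ → Ω → Matrix (Fin d) (Fin d) ℝ) (X : ℕ → Ω → (Fin d → ℝ))
    (S : Matrix (Fin d × Fin d) (Fin d × Fin d) ℝ)
    (hRmeas : ∀ n, Measurable (R n)) (hXmeas : ∀ n, Measurable (X n))
    (hRL2 : ∀ n i j, MemLp (fun ω => R n ω i j) 2 P)
    (hXL2 : ∀ i, MemLp (fun ω => X 0 ω i) 2 P)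
    (hiid : ∀ n, P.map (R n) = P.map (R 0))
    (hindep : ∀ n, IndepFun (R n) (X n) P)
    (hrec : ∀ n ω, X (n + 1) ω = (R n ω).mulVec (X n ω))
    (hS : ∀ n, ∀ p q : Fin d × Fin d,
      (∫ ω, R n ω p.1 q.1 * R n ω p.2 q.2 ∂P) = S p q)
    (hρ : ∀ μ ∈ spectrum ℂ (S.map (Complex.ofReal ·)), ‖μ‖ < 1) :
    Tendsto (fun n => ∫ ω, ∑ i, (X n ω i) ^ 2 ∂P) atTop (nhds 0) :=
  ms_stability_of_spectral_radius_lt_one_general P R X S hRL2 hXL2 hindep hrec hS hρ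
end

section
/- The zero solution of the 2-dimensional SDE dX = diag(λ,λ)X dt + diag(ε,−ε)X dW₁ + offdiag(σ,σ)X dW₂ is asymptotically mean-square stable if and only if 2λ + ε² + σ² < 0. -/
open Kronecker Matrix


set_option maxHeartbeats 1000000 in
private lemma det_fin_four' {R : Type*} [CommRing R] (M : Matrix (Fin 4) (Fin 4) R) :
    M.det =
      M 0 0 * M 1 1 * M 2 2 * M 3 3 - M 0 0 * M 1 1 * M 2 3 * M 3 2 - M 0 0 * M 1 2 * M 2 1 * M 3 3 +
      M 0 0 * M 1 2 * M 2 3 * M 3 1 + M 0 0 * M 1 3 * M 2 1 * M 3 2 - M 0 0 * M 1 3 * M 2 2 * M 3 1 -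
      M 0 1 * M 1 0 * M 2 2 * M 3 3 + M 0 1 * M 1 0 * M 2 3 * M 3 2 + M 0 1 * M 1 2 * M 2 0 * M 3 3 -
      M 0 1 * M 1 2 * M 2 3 * M 3 0 - M 0 1 * M 1 3 * M 2 0 * M 3 2 + M 0 1 * M 1 3 * M 2 2 * M 3 0 +
      M 0 2 * M 1 0 * M 2 1 * M 3 3 - M 0 2 * M 1 0 * M 2 3 * M 3 1 - M 0 2 * M 1 1 * M 2 0 * M 3 3 +
      M 0 2 * M 1 1 * M 2 3 * M 3 0 + M 0 2 * M 1 3 * M 2 0 * M 3 1 - M 0 2 * M 1 3 * M 2 1 * M 3 0 -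
      M 0 3 * M 1 0 * M 2 1 * M 3 2 + M 0 3 * M 1 0 * M 2 2 * M 3 1 + M 0 3 * M 1 1 * M 2 0 * M 3 2 -
      M 0 3 * M 1 1 * M 2 2 * M 3 0 - M 0 3 * M 1 2 * M 2 0 * M 3 1 + M 0 3 * M 1 2 * M 2 1 * M 3 0 := by
  rw [Matrix.det_succ_row_zero, Fin.sum_univ_four]
  simp [Matrix.det_fin_three, Matrix.submatrix_apply, Fin.succAbove,
    show (Fin.succ 2 : Fin 4) = 3 from rfl, show (Fin.castSucc 2 : Fin 4) = 2 from rfl,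
    show ¬((2:Fin 4) < 2) by decide, show ((2:Fin 4) < 3) by decide, show (((3:Fin 4)):ℕ) = 3 from rfl]
  ring

set_option maxHeartbeats 1000000 in
/-- The zero solution of the 2-dimensional SDE
`dX = diag(λ,λ)X dt + diag(ε,−ε)X dW₁ + offdiag(σ,σ)X dW₂` is asymptotically
mean-square stable — equivalently, the spectral abscissa of
`S = I⊗F + F⊗I + G₁⊗G₁ + G₂⊗G₂` is negative — if and only if
`2λ + ε² + σ² < 0`. -/
theorem test_system_one_ms_stability_iff (lam ε σ : ℝ) :
    (∀ μ ∈ spectrum ℂ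
        ((((1 : Matrix (Fin 2) (Fin 2) ℝ) ⊗ₖ !![lam, 0; 0, lam]
            + !![lam, 0; 0, lam] ⊗ₖ (1 : Matrix (Fin 2) (Fin 2) ℝ)
            + !![ε, 0; 0, -ε] ⊗ₖ !![ε, 0; 0, -ε]
            + !![(0:ℝ), σ; σ, 0] ⊗ₖ !![(0:ℝ), σ; σ, 0])).map (Complex.ofReal ·)),
      μ.re < 0) ↔
    2 * lam + ε ^ 2 + σ ^ 2 < 0 := by
  set N : Matrix (Fin 4) (Fin 4) ℂ :=
    !![((2*lam+ε^2 : ℝ) : ℂ), 0, 0, ((σ^2 : ℝ) : ℂ);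
       0, ((2*lam-ε^2 : ℝ) : ℂ), ((σ^2 : ℝ) : ℂ), 0;
       0, ((σ^2 : ℝ) : ℂ), ((2*lam-ε^2 : ℝ) : ℂ), 0;
       ((σ^2 : ℝ) : ℂ), 0, 0, ((2*lam+ε^2 : ℝ) : ℂ)] with hN
  have hspec :
      spectrum ℂ ((((1 : Matrix (Fin 2) (Fin 2) ℝ) ⊗ₖ !![lam, 0; 0, lam]
            + !![lam, 0; 0, lam] ⊗ₖ (1 : Matrix (Fin 2) (Fin 2) ℝ)
            + !![ε, 0; 0, -ε] ⊗ₖ !![ε, 0; 0, -ε]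
            + !![(0:ℝ), σ; σ, 0] ⊗ₖ !![(0:ℝ), σ; σ, 0])).map (Complex.ofReal ·))
        = spectrum ℂ N := by
    have : (((1 : Matrix (Fin 2) (Fin 2) ℝ) ⊗ₖ !![lam, 0; 0, lam]
            + !![lam, 0; 0, lam] ⊗ₖ (1 : Matrix (Fin 2) (Fin 2) ℝ)
            + !![ε, 0; 0, -ε] ⊗ₖ !![ε, 0; 0, -ε]
            + !![(0:ℝ), σ; σ, 0] ⊗ₖ !![(0:ℝ), σ; σ, 0])).map (Complex.ofReal ·)
        = Matrix.reindexAlgEquiv ℂ ℂ finProdFinEquiv.symm N := by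
      ext i j
      obtain ⟨i1, i2⟩ := i
      obtain ⟨j1, j2⟩ := j
      fin_cases i1 <;> fin_cases i2 <;> fin_cases j1 <;> fin_cases j2 <;>
        simp [Matrix.kroneckerMap_apply, Matrix.one_apply, finProdFinEquiv, hN] <;>
        push_cast <;> ring
    rw [this, AlgEquiv.spectrum_eq]
  have hmem : ∀ μ : ℂ, μ ∈ spectrum ℂ N ↔
      (μ - ((2*lam+ε^2+σ^2 : ℝ) : ℂ)) * (μ - ((2*lam+ε^2-σ^2 : ℝ) : ℂ))
        * (μ - ((2*lam-ε^2+σ^2 : ℝ) : ℂ)) * (μ - ((2*lam-ε^2-σ^2 : ℝ) : ℂ)) = 0 := by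
    intro μ
    rw [spectrum.mem_iff, Matrix.isUnit_iff_isUnit_det, isUnit_iff_ne_zero, not_not]
    have : (algebraMap ℂ (Matrix (Fin 4) (Fin 4) ℂ) μ - N).det
        = (μ - ((2*lam+ε^2+σ^2 : ℝ) : ℂ)) * (μ - ((2*lam+ε^2-σ^2 : ℝ) : ℂ))
        * (μ - ((2*lam-ε^2+σ^2 : ℝ) : ℂ)) * (μ - ((2*lam-ε^2-σ^2 : ℝ) : ℂ)) := by
      rw [Algebra.algebraMap_eq_smul_one]
      rw [det_fin_four']
      simp [Matrix.sub_apply, Matrix.smul_apply, Matrix.one_apply, hN]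
      ring
    rw [this]
  constructor
  · intro h
    have key := h ((2*lam+ε^2+σ^2 : ℝ) : ℂ) (by
      rw [hspec, hmem]
      simp)
    rw [Complex.ofReal_re] at key; linarith
  · intro h μ hμ
    rw [hspec, hmem μ] at hμ
    have hε := sq_nonneg ε
    have hσ := sq_nonneg σ
    rcases mul_eq_zero.1 hμ with h4 | h4
    · rcases mul_eq_zero.1 h4 with h3 | h3
      · rcases mul_eq_zero.1 h3 with h2 | h2
        · rw [sub_eq_zero] at h2; subst h2; rw [Complex.ofReal_re]; linarith
        · rw [sub_eq_zero] at h2; subst h2; rw [Complex.ofReal_re]; linarith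
      · rw [sub_eq_zero] at h3; subst h3; rw [Complex.ofReal_re]; linarith
    · rw [sub_eq_zero] at h4; subst h4; rw [Complex.ofReal_re]; linarith
end

section
/- For the drifting split-step backward Milstein (DSSBM) method applied to the test system with F = λI₂, G₁ = diag(ε,−ε), G₂ = antidiag(σ,σ), the zero solution of the discrete scheme is asymptotically mean-square stable if and only if 1 − 2(1−x)² + (y² + z² + 1)² < 0, where x = hλ, y² = hε², z² = hσ². -/
/-!
The Milstein part of `S` equals `1 + K + K² / 2` with `K = h (G₁ ⊗ G₁ + G₂ ⊗ G₂)`, because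
`(AB + BA) ⊗ (AB + BA) + (AB - BA) ⊗ (AB - BA) = 2 (AB ⊗ AB + BA ⊗ BA)`, and `P ⊗ P` is the
scalar `(1 - hλ)⁻²`; so `S` is a polynomial in `K`. For the test system
`K = hε² Z ⊗ Z + hσ² X ⊗ X` with Pauli matrices `Z, X`. Since `Z ⊗ Z` and `X ⊗ X` are commuting
involutions, the eigenvalues of `K` are among `±(hε² + hσ²)`, `±(hε² - hσ²)`, and
`hε² + hσ²` is one of them, with eigenvectors in the range of `(1 + Z ⊗ Z)(1 + X ⊗ X)`.
By spectral mapping the eigenvalues of `S` are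
`(1 - hλ)⁻² (1 + u + u² / 2)` for these `u`; this is positive and, for `|u| ≤ s`, largest at
`u = s = hε² + hσ²`.
-/

open Kronecker Matrix Polynomial

section Kronecker

variable {α l m : Type*} [CommRing α]

theorem add_kronecker_add_add_sub_kronecker_sub (u v : Matrix l m α) :
    (u + v) ⊗ₖ (u + v) + (u - v) ⊗ₖ (u - v) = (2 : α) • (u ⊗ₖ u + v ⊗ₖ v) := by
  ext ⟨i, i'⟩ ⟨j, j'⟩
  simp only [Matrix.add_apply, Matrix.sub_apply, kronecker_apply, Matrix.smul_apply, smul_eq_mul]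
  ring

theorem neg_kronecker_neg (u v : Matrix l m α) : (-u) ⊗ₖ (-v) = u ⊗ₖ v := by
  ext ⟨i, i'⟩ ⟨j, j'⟩
  simp only [Matrix.neg_apply, kronecker_apply, neg_mul_neg]

variable [Fintype m]

theorem commute_kronecker_self_of_mul_eq_neg {u v : Matrix m m α} (huv : u * v = -(v * u)) :
    Commute (u ⊗ₖ u) (v ⊗ₖ v) := by
  rw [Commute, SemiconjBy, ← mul_kronecker_mul, ← mul_kronecker_mul, huv, neg_kronecker_neg]

theorem kronecker_self_mul_self [DecidableEq m] {u : Matrix m m α} (hu : u * u = 1) :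
    u ⊗ₖ u * u ⊗ₖ u = 1 := by
  rw [← mul_kronecker_mul, hu, one_kronecker_one]

end Kronecker

theorem milstein_ms_matrix_eq {R n : Type*} [Field R] [CharZero R] [Fintype n] [DecidableEq n]
    (h : R) (G₁ G₂ : Matrix n n R) :
    (1 : Matrix (n × n) (n × n) R) + h • (G₁ ⊗ₖ G₁ + G₂ ⊗ₖ G₂)
        + (h ^ 2 / 2) • ((G₁ * G₁) ⊗ₖ (G₁ * G₁) + (G₂ * G₂) ⊗ₖ (G₂ * G₂))
        + (h ^ 2 / 4) • ((G₁ * G₂ + G₂ * G₁) ⊗ₖ (G₁ * G₂ + G₂ * G₁))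
        + (h ^ 2 / 4) • ((G₁ * G₂ - G₂ * G₁) ⊗ₖ (G₁ * G₂ - G₂ * G₁))
      = 1 + h • (G₁ ⊗ₖ G₁ + G₂ ⊗ₖ G₂) + (1 / 2 : R) • (h • (G₁ ⊗ₖ G₁ + G₂ ⊗ₖ G₂)) ^ 2 := by
  have hsq : (h • (G₁ ⊗ₖ G₁ + G₂ ⊗ₖ G₂)) ^ 2 = h ^ 2 • ((G₁ * G₁) ⊗ₖ (G₁ * G₁) +
      (G₁ * G₂) ⊗ₖ (G₁ * G₂) + (G₂ * G₁) ⊗ₖ (G₂ * G₁) + (G₂ * G₂) ⊗ₖ (G₂ * G₂)) := by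
    rw [sq, smul_mul_smul, ← sq, add_mul, mul_add, mul_add, mul_kronecker_mul, mul_kronecker_mul,
      mul_kronecker_mul, mul_kronecker_mul, add_assoc, add_assoc, add_assoc]
  rw [hsq]
  linear_combination (norm := module)
    (h ^ 2 / 4) • add_kronecker_add_add_sub_kronecker_sub (G₁ * G₂) (G₂ * G₁)

theorem kronecker_self_inv_one_sub_smul {K : Type*} [Field K] {lam h : K} (hinv : h * lam ≠ 1)
    {F : Matrix (Fin 2) (Fin 2) K} (hF : F = !![lam, 0; 0, lam]) :
    (1 - h • F)⁻¹ ⊗ₖ (1 - h • F)⁻¹ =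
      ((1 - h * lam) ^ 2)⁻¹ • (1 : Matrix (Fin 2 × Fin 2) (Fin 2 × Fin 2) K) := by
  have hne : 1 - h * lam ≠ 0 := sub_ne_zero.mpr hinv.symm
  have hscalar : 1 - h • F = (1 - h * lam) • 1 := by
    rw [hF, one_fin_two]
    ext i j
    fin_cases i <;> fin_cases j <;> simp
  have hinv' : (1 - h • F)⁻¹ = (1 - h * lam)⁻¹ • 1 := by
    rw [hscalar]
    exact inv_eq_right_inv (by rw [smul_mul_smul, one_mul, mul_inv_cancel₀ hne, one_smul])
  rw [hinv', smul_kronecker, kronecker_smul, one_kronecker_one, smul_smul, ← sq, inv_pow]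

def pauliZ (α : Type*) [Zero α] [One α] [Neg α] : Matrix (Fin 2) (Fin 2) α := !![1, 0; 0, -1]

def pauliX (α : Type*) [Zero α] [One α] : Matrix (Fin 2) (Fin 2) α := !![0, 1; 1, 0]

section Pauli

variable (α : Type*) [CommRing α]

theorem pauliZ_mul_self : pauliZ α * pauliZ α = 1 := by
  rw [pauliZ, mul_fin_two, one_fin_two]
  simp

theorem pauliX_mul_self : pauliX α * pauliX α = 1 := by
  rw [pauliX, mul_fin_two, one_fin_two]
  simp

theorem pauliZ_mul_pauliX : pauliZ α * pauliX α = -(pauliX α * pauliZ α) := by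
  rw [pauliZ, pauliX, mul_fin_two, mul_fin_two]
  simp

theorem one_add_pauliZ_kronecker_mul_one_add_pauliX_kronecker_ne_zero [NeZero (2 : α)] :
    (1 + pauliZ α ⊗ₖ pauliZ α) * (1 + pauliX α ⊗ₖ pauliX α) ≠ 0 := by
  have h00 : ((1 + pauliZ α ⊗ₖ pauliZ α) * (1 + pauliX α ⊗ₖ pauliX α)) (0, 0) (0, 0) = 2 := by
    simp [Matrix.mul_apply, Fintype.sum_prod_type, Fin.sum_univ_two, pauliZ, pauliX, one_apply,
      one_add_one_eq_two]
  intro h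
  rw [h, Matrix.zero_apply] at h00
  exact two_ne_zero h00.symm

theorem smul_kronecker_add_eq_pauli {ε σ h : α} {G₁ G₂ : Matrix (Fin 2) (Fin 2) α}
    (hG₁ : G₁ = !![ε, 0; 0, -ε]) (hG₂ : G₂ = !![0, σ; σ, 0]) :
    h • (G₁ ⊗ₖ G₁ + G₂ ⊗ₖ G₂) =
      (h * ε ^ 2) • pauliZ α ⊗ₖ pauliZ α + (h * σ ^ 2) • pauliX α ⊗ₖ pauliX α := by
  have hZ : G₁ = ε • pauliZ α := by rw [hG₁, pauliZ]; simp
  have hX : G₂ = σ • pauliX α := by rw [hG₂, pauliX]; simp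
  rw [hZ, hX]
  simp only [smul_kronecker, kronecker_smul, smul_smul, smul_add]
  module

end Pauli

section CommutingInvolutions

variable {𝕜 A : Type*} [Field 𝕜] [Ring A] [Algebra 𝕜 A] {a b : A}

theorem sq_smul_add_smul_of_commute (hab : Commute a b) (ha : a * a = 1) (hb : b * b = 1)
    (y z : 𝕜) : (y • a + z • b) ^ 2 = (y ^ 2 + z ^ 2) • 1 + (2 * y * z) • (a * b) := by
  rw [sq]
  simp only [add_mul, mul_add, smul_mul_smul, ha, hb, hab.eq]
  module

theorem aeval_smul_add_smul_of_commute (hab : Commute a b) (ha : a * a = 1) (hb : b * b = 1)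
    (y z : 𝕜) :
    aeval (y • a + z • b) ((X ^ 2 - C ((y + z) ^ 2)) * (X ^ 2 - C ((y - z) ^ 2))) = 0 := by
  have hab2 : (a * b) * (a * b) = 1 := by
    rw [mul_assoc, ← mul_assoc b, ← hab.eq, mul_assoc, hb, mul_one, ha]
  simp only [map_mul, map_sub, aeval_X_pow, aeval_C, Algebra.algebraMap_eq_smul_one,
    sq_smul_add_smul_of_commute hab ha hb]
  simp only [sub_mul, mul_sub, add_mul, mul_add, smul_mul_smul, one_mul, mul_one, hab2]
  module

theorem eq_of_mem_spectrum_smul_add_smul (hab : Commute a b) (ha : a * a = 1)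
    (hb : b * b = 1) {y z u : 𝕜} (hu : u ∈ spectrum 𝕜 (y • a + z • b)) :
    u = y + z ∨ u = -(y + z) ∨ u = y - z ∨ u = -(y - z) := by
  rcases subsingleton_or_nontrivial A with _ | _
  · simp [spectrum.of_subsingleton] at hu
  · have hroot := spectrum.subset_polynomial_aeval (y • a + z • b)
      ((X ^ 2 - C ((y + z) ^ 2)) * (X ^ 2 - C ((y - z) ^ 2))) ⟨u, hu, rfl⟩
    rw [aeval_smul_add_smul_of_commute hab ha hb] at hroot
    simp only [spectrum.zero_eq, Set.mem_singleton_iff, eval_mul, eval_sub, eval_pow, eval_X,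
      eval_C, mul_eq_zero, sub_eq_zero, sq_eq_sq_iff_eq_or_eq_neg] at hroot
    tauto

theorem add_mem_spectrum_smul_add_smul (hab : Commute a b) (ha : a * a = 1)
    (hb : b * b = 1) (hne : (1 + a) * (1 + b) ≠ 0) (y z : 𝕜) :
    y + z ∈ spectrum 𝕜 (y • a + z • b) := by
  have ha' : a * ((1 + a) * (1 + b)) = (1 + a) * (1 + b) := by
    rw [← mul_assoc, mul_add a, ha, mul_one, add_comm a]
  have hb' : b * ((1 + a) * (1 + b)) = (1 + a) * (1 + b) := by
    rw [← mul_assoc, ((Commute.one_right b).add_right hab.symm).eq, mul_assoc, mul_add b, hb,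
      mul_one, add_comm b]
  have hker : (algebraMap 𝕜 A (y + z) - (y • a + z • b)) * ((1 + a) * (1 + b)) = 0 := by
    rw [sub_mul, add_mul (y • a), smul_mul_assoc, smul_mul_assoc, ha', hb',
      Algebra.algebraMap_eq_smul_one, smul_mul_assoc, one_mul, add_smul, sub_self]
  rw [spectrum.mem_iff]
  exact fun hunit => hne (hunit.mul_left_cancel (hker.trans (mul_zero _).symm))

end CommutingInvolutions

theorem one_add_add_half_sq_le {t s : ℝ} (hts : |t| ≤ s) :
    1 + t + 1 / 2 * t ^ 2 ≤ 1 + s + 1 / 2 * s ^ 2 := by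
  obtain ⟨h1, h2⟩ := abs_le.mp hts
  nlinarith

theorem forall_mem_spectrum_smul_add_smul_norm_lt_one_iff {A : Type*} [Ring A] [Algebra ℂ A]
    {a b : A} (hab : Commute a b) (ha : a * a = 1) (hb : b * b = 1)
    (hne : (1 + a) * (1 + b) ≠ 0) {y z c : ℝ} (hy : 0 ≤ y) (hz : 0 ≤ z) (hc : 0 < c) :
    (∀ u ∈ spectrum ℂ ((y : ℂ) • a + (z : ℂ) • b), ‖(c : ℂ) * (1 + u + 1 / 2 * u ^ 2)‖ < 1) ↔
      c * (1 + (y + z) + 1 / 2 * (y + z) ^ 2) < 1 := by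
  have hnorm (t : ℝ) : ‖(c : ℂ) * (1 + t + 1 / 2 * t ^ 2)‖ = c * (1 + t + 1 / 2 * t ^ 2) := by
    rw [← Real.norm_of_nonneg (by nlinarith [sq_nonneg (t + 1)] :
      0 ≤ c * (1 + t + 1 / 2 * t ^ 2)), ← Complex.norm_real]
    push_cast
    rfl
  constructor
  · intro hstable
    have := hstable _ (add_mem_spectrum_smul_add_smul hab ha hb hne (y : ℂ) z)
    rwa [← Complex.ofReal_add, hnorm] at this
  · intro hs u hu
    have hreal : ∃ t : ℝ, u = t ∧ |t| ≤ y + z := by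
      have hd : |y - z| ≤ y + z := abs_sub_le_iff.mpr ⟨by linarith, by linarith⟩
      rcases eq_of_mem_spectrum_smul_add_smul hab ha hb hu with rfl | rfl | rfl | rfl
      · exact ⟨y + z, by push_cast; rfl, (abs_of_nonneg (by positivity)).le⟩
      · exact ⟨-(y + z), by push_cast; rfl, by rw [abs_neg, abs_of_nonneg (by positivity)]⟩
      · exact ⟨y - z, by push_cast; rfl, hd⟩
      · exact ⟨-(y - z), by push_cast; rfl, by rwa [abs_neg]⟩
    obtain ⟨t, rfl, ht⟩ := hreal
    rw [hnorm]
    exact (mul_le_mul_of_nonneg_left (one_add_add_half_sq_le ht) hc.le).trans_lt hs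

theorem spectrum_map_ofReal_aeval {n : Type*} [Fintype n] [DecidableEq n] [Nonempty n]
    (M : Matrix n n ℝ) (p : ℝ[X]) :
    spectrum ℂ ((aeval M p).map (Complex.ofReal ·)) =
      (fun u => eval u (p.map Complex.ofRealHom)) '' spectrum ℂ (M.map (Complex.ofReal ·)) := by
  have hmap : (aeval M p).map (Complex.ofReal ·) =
      aeval (M.map (Complex.ofReal ·)) (p.map Complex.ofRealHom) :=
    ((aeval_map_algebraMap ℂ _ p).trans (aeval_algHom_apply Complex.ofRealAm.mapMatrix M p)).symm
  rw [hmap]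
  exact spectrum.map_polynomial_aeval_of_nonempty _ _
    (spectrum.nonempty_of_isAlgClosed_of_finiteDimensional ℂ _)

theorem forall_mem_spectrum_pauli_norm_lt_one_iff {y z c : ℝ} (hy : 0 ≤ y) (hz : 0 ≤ z)
    (hc : 0 < c) :
    (∀ u ∈ spectrum ℂ ((y • pauliZ ℝ ⊗ₖ pauliZ ℝ + z • pauliX ℝ ⊗ₖ pauliX ℝ).map
        (Complex.ofReal ·)), ‖(c : ℂ) * (1 + u + 1 / 2 * u ^ 2)‖ < 1) ↔
      c * (1 + (y + z) + 1 / 2 * (y + z) ^ 2) < 1 := by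
  set φ := Complex.ofRealAm.mapMatrix (m := Fin 2 × Fin 2)
  have hφ : Function.Injective φ := Matrix.map_injective Complex.ofReal_injective
  have hmap : (y • pauliZ ℝ ⊗ₖ pauliZ ℝ + z • pauliX ℝ ⊗ₖ pauliX ℝ).map (Complex.ofReal ·) =
      (y : ℂ) • φ (pauliZ ℝ ⊗ₖ pauliZ ℝ) + (z : ℂ) • φ (pauliX ℝ ⊗ₖ pauliX ℝ) := by
    rw [Complex.coe_smul, Complex.coe_smul, ← map_smul, ← map_smul, ← map_add]
    rfl
  rw [hmap]
  refine forall_mem_spectrum_smul_add_smul_norm_lt_one_iff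
    ((commute_kronecker_self_of_mul_eq_neg (pauliZ_mul_pauliX ℝ)).map φ) ?_ ?_ ?_ hy hz hc
  · rw [← map_mul, kronecker_self_mul_self (pauliZ_mul_self ℝ), map_one]
  · rw [← map_mul, kronecker_self_mul_self (pauliX_mul_self ℝ), map_one]
  · rw [← map_one φ, ← map_add, ← map_add, ← map_mul, ne_eq, map_eq_zero_iff φ hφ]
    exact one_add_pauliZ_kronecker_mul_one_add_pauliX_kronecker_ne_zero ℝ

/-- For the drifting split-step backward Milstein (DSSBM) method applied to the
test system `F = λI₂`, `G₁ = diag(ε,−ε)`, `G₂ = antidiag(σ,σ)`, the zero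
solution of the discrete scheme is asymptotically mean-square stable
(`ρ(E[Rₙ⊗Rₙ]) < 1`) if and only if `1 − 2(1−x)² + (y²+z²+1)² < 0`, where
`x = hλ`, `y² = hε²`, `z² = hσ²`. Here the mean-square stability matrix is
`S = (I + S_Mil^stoch)(P⊗P)` with `P = (I−hF)⁻¹`. -/
theorem dssbm_ms_stability_iff (lam ε σ h : ℝ) (hh : 0 < h)
    (hinv : h * lam ≠ 1)
    (F G₁ G₂ P : Matrix (Fin 2) (Fin 2) ℝ)
    (hF : F = !![lam, 0; 0, lam]) (hG₁ : G₁ = !![ε, 0; 0, -ε])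
    (hG₂ : G₂ = !![(0:ℝ), σ; σ, 0])
    (hP : P = ((1 : Matrix (Fin 2) (Fin 2) ℝ) - h • F)⁻¹)
    (S : Matrix (Fin 2 × Fin 2) (Fin 2 × Fin 2) ℝ)
    (hS : S = ((1 : Matrix (Fin 2 × Fin 2) (Fin 2 × Fin 2) ℝ)
        + h • (G₁ ⊗ₖ G₁ + G₂ ⊗ₖ G₂)
        + (h ^ 2 / 2) • ((G₁ * G₁) ⊗ₖ (G₁ * G₁) + (G₂ * G₂) ⊗ₖ (G₂ * G₂))
        + (h ^ 2 / 4) • ((G₁ * G₂ + G₂ * G₁) ⊗ₖ (G₁ * G₂ + G₂ * G₁))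
        + (h ^ 2 / 4) • ((G₁ * G₂ - G₂ * G₁) ⊗ₖ (G₁ * G₂ - G₂ * G₁)))
        * (P ⊗ₖ P)) :
    (∀ μ ∈ spectrum ℂ (S.map (Complex.ofReal ·)), ‖μ‖ < 1) ↔
      1 - 2 * (1 - h * lam) ^ 2 + (h * ε ^ 2 + h * σ ^ 2 + 1) ^ 2 < 0 := by
  have hne : 1 - h * lam ≠ 0 := sub_ne_zero.mpr hinv.symm
  have hS_aeval : S = aeval
      ((h * ε ^ 2) • pauliZ ℝ ⊗ₖ pauliZ ℝ + (h * σ ^ 2) • pauliX ℝ ⊗ₖ pauliX ℝ)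
      (C ((1 - h * lam) ^ 2)⁻¹ * (1 + X + C (1 / 2) * X ^ 2)) := by
    rw [hS, milstein_ms_matrix_eq, smul_kronecker_add_eq_pauli ℝ hG₁ hG₂, hP,
      kronecker_self_inv_one_sub_smul hinv hF]
    simp only [map_mul, map_add, map_one, map_pow, aeval_C, aeval_X,
      Algebra.algebraMap_eq_smul_one, smul_mul_assoc, one_mul, Matrix.mul_smul, mul_one]
  rw [hS_aeval, spectrum_map_ofReal_aeval, Set.forall_mem_image]
  simp only [eval_map, eval₂_mul, eval₂_add, eval₂_C, eval₂_X, eval₂_one, eval₂_X_pow,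
    Complex.ofRealHom_eq_coe, Complex.ofReal_div, Complex.ofReal_one, Complex.ofReal_ofNat]
  rw [forall_mem_spectrum_pauli_norm_lt_one_iff (by positivity) (by positivity) (by positivity),
    inv_mul_lt_one₀ (by positivity)]
  constructor <;> intro hstable <;> linarith
end

section
/- For the modified split-step backward Milstein (MSSBM) method applied to the same test system (F = λI₂, G₁ = diag(ε,−ε), G₂ = antidiag(σ,σ)), the zero solution is asymptotically mean-square stable if and only if (y²+z²+1)² + 2x(y²+z²−x+2) − (y²z²+1) < 0, with x = hλ, y² = hε², z² = hσ². -/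
open Kronecker Matrix

/-! The implicit matrix `I - hF + (h/2)(G₁² + G₂²)` is the scalar `δ = 1 - x + (y + z)/2`,
so `P = δ⁻¹ I`. Since `G₁² = ε² I`, `G₂² = σ² I` and `G₁G₂ = -G₂G₁`, the second-moment matrix has,
in the lexicographic order of `Fin 2 × Fin 2`, the shape `[[a,0,0,b],[0,c,d,0],[0,d,c,0],[b,0,0,a]]`
with eigenvalues `a ± b` and `c ± d`. For `y, z ≥ 0` all four are positive and dominated by
`a + b = δ⁻² n`, where `n = 1 + 2y + 2z + yz + 3(y² + z²)/4`, and `2 (n - δ²)` is exactly the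
polynomial of the criterion. -/

def xShapeMatrix {K : Type*} [Zero K] (a b c d : K) : Matrix (Fin 2 × Fin 2) (Fin 2 × Fin 2) K :=
  reindex finProdFinEquiv.symm finProdFinEquiv.symm
    !![a, 0, 0, b; 0, c, d, 0; 0, d, c, 0; b, 0, 0, a]

theorem det_algebraMap_sub_xShape {K : Type*} [CommRing K] (a b c d μ : K) :
    (algebraMap K (Matrix (Fin 4) (Fin 4) K) μ
        - !![a, 0, 0, b; 0, c, d, 0; 0, d, c, 0; b, 0, 0, a]).det
      = (μ - (a + b)) * (μ - (a - b)) * ((μ - (c + d)) * (μ - (c - d))) := by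
  simp [det_succ_row_zero, Fin.sum_univ_succ, Fin.succAbove, algebraMap_matrix_apply]
  ring

theorem spectrum_xShapeMatrix {K : Type*} [Field K] (a b c d : K) :
    spectrum K (xShapeMatrix a b c d) = {a + b, a - b, c + d, c - d} := by
  ext μ
  rw [xShapeMatrix, ← coe_reindexAlgEquiv K K, AlgEquiv.spectrum_eq, spectrum.mem_iff,
    isUnit_iff_isUnit_det, isUnit_iff_ne_zero, not_not, det_algebraMap_sub_xShape]
  simp only [mul_eq_zero, sub_eq_zero, Set.mem_insert_iff, Set.mem_singleton_iff, or_assoc]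

theorem xShapeMatrix_map {K L : Type*} [Zero K] [Zero L] (f : K → L) (hf : f 0 = 0)
    (a b c d : K) : (xShapeMatrix a b c d).map f = xShapeMatrix (f a) (f b) (f c) (f d) := by
  simp only [xShapeMatrix, reindex_apply, ← submatrix_map]
  congr 1
  ext i j
  fin_cases i <;> fin_cases j <;> simp [hf]

theorem abs_xShape_eigenvalues_lt_one_iff {a b c d : ℝ} (hdc : |d| < c) (hca : c ≤ a)
    (hdb : |d| ≤ b) :
    (|a + b| < 1 ∧ |a - b| < 1 ∧ |c + d| < 1 ∧ |c - d| < 1) ↔ a + b < 1 := by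
  have hd₁ := neg_abs_le d
  have hd₂ := le_abs_self d
  simp only [abs_lt]
  constructor
  · rintro ⟨⟨-, h⟩, -⟩
    exact h
  · intro h
    refine ⟨⟨?_, h⟩, ⟨?_, ?_⟩, ⟨?_, ?_⟩, ?_, ?_⟩ <;> linarith

noncomputable def mssmSecondMomentMatrix (h : ℝ) (G₁ G₂ P : Matrix (Fin 2) (Fin 2) ℝ) :
    Matrix (Fin 2 × Fin 2) (Fin 2 × Fin 2) ℝ :=
  ((1 : Matrix (Fin 2 × Fin 2) (Fin 2 × Fin 2) ℝ)
        + h • (G₁ ⊗ₖ G₁ + G₂ ⊗ₖ G₂)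
        + (h ^ 2 / 2) • ((G₁ * G₁) ⊗ₖ (G₁ * G₁) + (G₂ * G₂) ⊗ₖ (G₂ * G₂))
        + (h ^ 2 / 4) • ((G₁ * G₂ + G₂ * G₁) ⊗ₖ (G₁ * G₂ + G₂ * G₁))
        + (h ^ 2 / 4) • ((G₁ * G₂ - G₂ * G₁) ⊗ₖ (G₁ * G₂ - G₂ * G₁))
        + (h / 2) • ((G₁ * G₁ + G₂ * G₂) ⊗ₖ (1 : Matrix (Fin 2) (Fin 2) ℝ)
            + (1 : Matrix (Fin 2) (Fin 2) ℝ) ⊗ₖ (G₁ * G₁ + G₂ * G₂))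
        + (h ^ 2 / 4) • ((G₁ * G₁) ⊗ₖ (G₁ * G₁) + (G₂ * G₂) ⊗ₖ (G₂ * G₂)))
    * (P ⊗ₖ P)

theorem mssmSecondMomentMatrix_diag_antidiag (h ε σ p : ℝ) :
    mssmSecondMomentMatrix h !![ε, 0; 0, -ε] !![0, σ; σ, 0] (p • 1) =
      xShapeMatrix
        (p ^ 2 *
          (1 + 2 * (h * ε ^ 2) + h * σ ^ 2 + 3 / 4 * ((h * ε ^ 2) ^ 2 + (h * σ ^ 2) ^ 2)))
        (p ^ 2 * (h * σ ^ 2 + h * ε ^ 2 * (h * σ ^ 2)))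
        (p ^ 2 * (1 + h * σ ^ 2 + 3 / 4 * ((h * ε ^ 2) ^ 2 + (h * σ ^ 2) ^ 2)))
        (p ^ 2 * (h * σ ^ 2 - h * ε ^ 2 * (h * σ ^ 2))) := by
  have e₀ : finProdFinEquiv ((0 : Fin 2), (0 : Fin 2)) = 0 := rfl
  have e₁ : finProdFinEquiv ((0 : Fin 2), (1 : Fin 2)) = 1 := rfl
  have e₂ : finProdFinEquiv ((1 : Fin 2), (0 : Fin 2)) = 2 := rfl
  have e₃ : finProdFinEquiv ((1 : Fin 2), (1 : Fin 2)) = 3 := rfl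
  ext ⟨i, i'⟩ ⟨j, j'⟩
  fin_cases i <;> fin_cases i' <;> fin_cases j <;> fin_cases j' <;>
    simp [mssmSecondMomentMatrix, xShapeMatrix, mul_apply, Fintype.sum_prod_type, one_apply,
      e₀, e₁, e₂, e₃] <;> ring

theorem mssbm_implicitMatrix_inv {lam ε σ h : ℝ}
    (hδ : 1 - h * lam + (h * ε ^ 2 + h * σ ^ 2) / 2 ≠ 0) :
    ((1 : Matrix (Fin 2) (Fin 2) ℝ) - h • !![lam, 0; 0, lam]
        + (h / 2) • (!![ε, 0; 0, -ε] * !![ε, 0; 0, -ε]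
          + !![0, σ; σ, 0] * !![0, σ; σ, 0]))⁻¹
      = (1 - h * lam + (h * ε ^ 2 + h * σ ^ 2) / 2)⁻¹ • 1 := by
  have hM : (1 : Matrix (Fin 2) (Fin 2) ℝ) - h • !![lam, 0; 0, lam]
      + (h / 2) • (!![ε, 0; 0, -ε] * !![ε, 0; 0, -ε] + !![0, σ; σ, 0] * !![0, σ; σ, 0])
      = (1 - h * lam + (h * ε ^ 2 + h * σ ^ 2) / 2) • 1 := by
    ext i j
    fin_cases i <;> fin_cases j <;> simp <;> ring
  rw [hM]
  exact inv_eq_right_inv (by rw [smul_mul_smul_comm, one_mul, mul_inv_cancel₀ hδ, one_smul])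

theorem mssbm_eigenvalues_abs_lt_one_iff {p x y z : ℝ} (hy : 0 ≤ y) (hz : 0 ≤ z)
    (hp : p * (1 - x + (y + z) / 2) = 1) :
    (|p ^ 2 * (1 + 2 * y + z + 3 / 4 * (y ^ 2 + z ^ 2)) + p ^ 2 * (z + y * z)| < 1 ∧
      |p ^ 2 * (1 + 2 * y + z + 3 / 4 * (y ^ 2 + z ^ 2)) - p ^ 2 * (z + y * z)| < 1 ∧
      |p ^ 2 * (1 + z + 3 / 4 * (y ^ 2 + z ^ 2)) + p ^ 2 * (z - y * z)| < 1 ∧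
      |p ^ 2 * (1 + z + 3 / 4 * (y ^ 2 + z ^ 2)) - p ^ 2 * (z - y * z)| < 1) ↔
      (y + z + 1) ^ 2 + 2 * x * (y + z - x + 2) - (y * z + 1) < 0 := by
  have hp₂ : 0 < p ^ 2 := by
    have : p ≠ 0 := left_ne_zero_of_mul_eq_one hp
    positivity
  have hyz : 0 ≤ y * z := mul_nonneg hy hz
  have hdb : |z - y * z| ≤ z + y * z := abs_le.2 ⟨by linarith, by linarith⟩
  have hdc : |z - y * z| < 1 + z + 3 / 4 * (y ^ 2 + z ^ 2) :=
    abs_lt.2 ⟨by nlinarith [sq_nonneg (y - z)], by nlinarith⟩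
  rw [abs_xShape_eigenvalues_lt_one_iff
    (by rw [abs_mul, abs_of_pos hp₂]; exact mul_lt_mul_of_pos_left hdc hp₂)
    (mul_le_mul_of_nonneg_left (by linarith) hp₂.le)
    (by rw [abs_mul, abs_of_pos hp₂]; exact mul_le_mul_of_nonneg_left hdb hp₂.le)]
  have hcriterion :
      2 * (p ^ 2 * (1 + 2 * y + z + 3 / 4 * (y ^ 2 + z ^ 2)) + p ^ 2 * (z + y * z) - 1)
      = p ^ 2 * ((y + z + 1) ^ 2 + 2 * x * (y + z - x + 2) - (y * z + 1)) := by
    linear_combination 2 * (p * (1 - x + (y + z) / 2) + 1) * hp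
  rw [← sub_neg, ← mul_lt_mul_iff_right₀ (two_pos : (0 : ℝ) < 2), mul_zero, hcriterion]
  exact ⟨fun h => neg_of_mul_neg_right h hp₂.le, mul_neg_of_pos_of_neg hp₂⟩

/-- For the modified split-step backward Milstein (MSSBM) method applied to the
test system `F = λI₂`, `G₁ = diag(ε,−ε)`, `G₂ = antidiag(σ,σ)`, the zero
solution of the discrete scheme is asymptotically mean-square stable
(`ρ(E[Rₙ⊗Rₙ]) < 1`) if and only if
`(y²+z²+1)² + 2x(y²+z²−x+2) − (y²z²+1) < 0`, with `x = hλ`, `y² = hε²`,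
`z² = hσ²`. Here `P = (I − hF + (h/2)(G₁²+G₂²))⁻¹` and the stability matrix
is given by the MSSM formula with `Q = I`. -/
theorem mssbm_ms_stability_iff (lam ε σ h : ℝ) (hh : 0 < h)
    (hinv : 1 - h * lam + (h / 2) * (ε ^ 2 + σ ^ 2) ≠ 0)
    (F G₁ G₂ P : Matrix (Fin 2) (Fin 2) ℝ)
    (hF : F = !![lam, 0; 0, lam]) (hG₁ : G₁ = !![ε, 0; 0, -ε])
    (hG₂ : G₂ = !![(0:ℝ), σ; σ, 0])
    (hP : P = ((1 : Matrix (Fin 2) (Fin 2) ℝ) - h • F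
        + (h / 2) • (G₁ * G₁ + G₂ * G₂))⁻¹)
    (S : Matrix (Fin 2 × Fin 2) (Fin 2 × Fin 2) ℝ)
    (hS : S = ((1 : Matrix (Fin 2 × Fin 2) (Fin 2 × Fin 2) ℝ)
        + h • (G₁ ⊗ₖ G₁ + G₂ ⊗ₖ G₂)
        + (h ^ 2 / 2) • ((G₁ * G₁) ⊗ₖ (G₁ * G₁) + (G₂ * G₂) ⊗ₖ (G₂ * G₂))
        + (h ^ 2 / 4) • ((G₁ * G₂ + G₂ * G₁) ⊗ₖ (G₁ * G₂ + G₂ * G₁))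
        + (h ^ 2 / 4) • ((G₁ * G₂ - G₂ * G₁) ⊗ₖ (G₁ * G₂ - G₂ * G₁))
        + (h / 2) • ((G₁ * G₁ + G₂ * G₂) ⊗ₖ (1 : Matrix (Fin 2) (Fin 2) ℝ)
            + (1 : Matrix (Fin 2) (Fin 2) ℝ) ⊗ₖ (G₁ * G₁ + G₂ * G₂))
        + (h ^ 2 / 4) • ((G₁ * G₁) ⊗ₖ (G₁ * G₁) + (G₂ * G₂) ⊗ₖ (G₂ * G₂)))
        * (P ⊗ₖ P)) :
    (∀ μ ∈ spectrum ℂ (S.map (Complex.ofReal ·)), ‖μ‖ < 1) ↔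
      (h * ε ^ 2 + h * σ ^ 2 + 1) ^ 2
        + 2 * (h * lam) * (h * ε ^ 2 + h * σ ^ 2 - h * lam + 2)
        - ((h * ε ^ 2) * (h * σ ^ 2) + 1) < 0 := by
  have hδ : 1 - h * lam + (h * ε ^ 2 + h * σ ^ 2) / 2 ≠ 0 := by convert hinv using 1; ring
  have hS' : S = mssmSecondMomentMatrix h G₁ G₂ P := hS
  subst hF hG₁ hG₂ hP hS'
  rw [mssbm_implicitMatrix_inv hδ, mssmSecondMomentMatrix_diag_antidiag,
    xShapeMatrix_map _ Complex.ofReal_zero, spectrum_xShapeMatrix]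
  simp only [Set.forall_mem_insert, Set.mem_singleton_iff, forall_eq, ← Complex.ofReal_add,
    ← Complex.ofReal_sub, Complex.norm_real, Real.norm_eq_abs]
  exact mssbm_eigenvalues_abs_lt_one_iff (by positivity) (by positivity) (inv_mul_cancel₀ hδ)
end

section
/- The deterministic stability function of the two-stage Adams–Moulton predictor–corrector method with parameter θ, R(x) = (1 + x(1/2 + θ(1 + γ₂x)/(1 − γ₁x)))/(1 − γ₁x) with γ₁ = 1/2 − θ, γ₂ = 1/2 + θ, satisfies: for θ = −1/2 − 1/√2, |R(x)| < 1 for all x < 0 (the method is A-stable on the negative real axis). -/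
/-!
Clearing the inner denominator gives `R(x) = (1 + 2θx + (θ² + θ - 1/4)x²) / (1 - γ₁x)²`.
The parameter `θ = -1/2 - 1/√2` is a root of `θ² + θ = 1/4`, so the quadratic term vanishes
and `R(x) = (1 + 2θx) / (1 - γ₁x)²`. For `x < 0` the numerator is positive, and since
`θ + γ₁ = 1/2` the inequality `1 + 2θx < (1 - γ₁x)²` reduces to `x < γ₁²x²`.
-/

namespace SSAMM

noncomputable def stabilityFunction (θ x : ℝ) : ℝ :=
  (1 + x * (1/2 + θ * (1 + (1/2 + θ) * x) / (1 - (1/2 - θ) * x))) / (1 - (1/2 - θ) * x)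

theorem stabilityFunction_eq {θ x : ℝ} (hx : 1 - (1/2 - θ) * x ≠ 0) :
    stabilityFunction θ x =
      (1 + 2 * θ * x + (θ ^ 2 + θ - 1/4) * x ^ 2) / (1 - (1/2 - θ) * x) ^ 2 := by
  unfold stabilityFunction
  -- keeps `field_simp` from expanding the denominator it has to clear
  generalize hd : 1 - (1/2 - θ) * x = d at hx ⊢
  field_simp
  linear_combination -(8 + 4 * x) * hd

theorem abs_one_add_two_mul_div_sq_lt_one {θ x : ℝ} (hθ : θ ≤ 0) (hx : x < 0) :
    |(1 + 2 * θ * x) / (1 - (1/2 - θ) * x) ^ 2| < 1 := by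
  have hnum : 0 < 1 + 2 * θ * x := by nlinarith
  have hden : 0 < (1 - (1/2 - θ) * x) ^ 2 := by
    have : 0 < 1 - (1/2 - θ) * x := by nlinarith
    positivity
  rw [abs_of_pos (div_pos hnum hden), div_lt_one hden]
  nlinarith [sq_nonneg ((1/2 - θ) * x)]

theorem sq_add_self_eq_quarter {θ : ℝ} (hθ : θ = -1/2 - 1/Real.sqrt 2) : θ ^ 2 + θ = 1/4 := by
  have hsq : (θ + 1/2) ^ 2 = 1/2 := by
    rw [hθ, show -1/2 - 1/Real.sqrt 2 + 1/2 = -(1/Real.sqrt 2) by ring, neg_sq, div_pow,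
      Real.sq_sqrt zero_le_two, one_pow]
  linear_combination hsq

end SSAMM

/-- The deterministic stability function of the two-stage Adams–Moulton
predictor–corrector method with parameter `θ`,
`R(x) = (1 + x(1/2 + θ(1 + γ₂x)/(1 − γ₁x)))/(1 − γ₁x)` with `γ₁ = 1/2 − θ`,
`γ₂ = 1/2 + θ`, satisfies for `θ = −1/2 − 1/√2`: `|R(x)| < 1` for all `x < 0`
(A-stability on the negative real axis). -/
theorem ssamm_minus_A_stable_neg_axis (θ γ₁ γ₂ : ℝ)
    (hθ : θ = -1/2 - 1/Real.sqrt 2) (hγ₁ : γ₁ = 1/2 - θ) (hγ₂ : γ₂ = 1/2 + θ) :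
    ∀ x : ℝ, x < 0 →
      |(1 + x * (1/2 + θ * (1 + γ₂ * x) / (1 - γ₁ * x))) / (1 - γ₁ * x)| < 1 := by
  intro x hx
  subst hγ₁ hγ₂
  have hθ_nonpos : θ ≤ 0 := by
    have : 0 < 1/Real.sqrt 2 := by positivity
    linarith
  have hden : 1 - (1/2 - θ) * x ≠ 0 := by nlinarith
  change |SSAMM.stabilityFunction θ x| < 1
  rw [SSAMM.stabilityFunction_eq hden, SSAMM.sq_add_self_eq_quarter hθ, sub_self, zero_mul, add_zero]
  exact SSAMM.abs_one_add_two_mul_div_sq_lt_one hθ_nonpos hx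
end
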